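/- Let A be a commutative C*-algebra with unit e and let M be a Hilbert A-module, and suppose there exist x₀ ∈ M and f₀ ∈ M' with f₀(x₀) = e. Let L = span{θ_{x,f₀} : x ∈ M} and R = span{θ_{x₀,f} : f ∈ M'}, and let I be the identity operator on M. Let J be a left A-module and let φ : End_A(M) × End_A(M) → J be an A-bilinear map preserving zero products. Then for all A, B ∈ End_A(M), L' ∈ L, and R' ∈ R: φ(A, L'B) = φ(AL', B) = φ(I, AL'B), and φ(AR', B) = φ(A, R'B) = φ(AR'B, I). -/

import Mathlib

set_option synthInstance.maxHeartbeats 1000000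
set_option maxHeartbeats 1000000

/-- `End_A(M)`: the algebra of all bounded `A`-linear operators on `M`, realized as a
subalgebra of the bounded `ℂ`-linear operators on `M`. -/
def EndA (A : Type*) (M : Type*) [CStarAlgebra A] [NormedAddCommGroup M] [NormedSpace ℂ M]
    [Module A M] [IsScalarTower ℂ A M] : Subalgebra ℂ (M →L[ℂ] M) where
  carrier := {T | ∀ (a : A) (x : M), T (a • x) = a • T x}
  add_mem' := by
    intro S T hS hT a x
    simp [hS a x, hT a x]
  mul_mem' := by
    intro S T hS hT a x
    simp only [ContinuousLinearMap.mul_apply, hT a x, hS a (T x)]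
  one_mem' := by intro a x; simp
  zero_mem' := by intro a x; simp
  algebraMap_mem' := by
    intro c a x
    simp only [Algebra.algebraMap_eq_smul_one, ContinuousLinearMap.smul_apply,
      ContinuousLinearMap.one_apply]
    exact smul_comm c a x

/-- `𝓛 = span {θ_{x,f₀} : x ∈ M}`. -/
noncomputable def Lset (A : Type*) (M : Type*) [CStarAlgebra A] [NormedAddCommGroup M]
    [NormedSpace ℂ M] [Module A M] [IsScalarTower ℂ A M] [IsBoundedSMul A M]
    (f₀ : M →L[ℂ] A) : Submodule ℂ (M →L[ℂ] M) :=
  Submodule.span ℂ {S | ∃ x : M, S = f₀.smulRight x}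

/-- `𝓡 = span {θ_{x₀,f} : f ∈ M'}`. -/
noncomputable def Rset (A : Type*) (M : Type*) [CStarAlgebra A] [NormedAddCommGroup M]
    [NormedSpace ℂ M] [Module A M] [IsScalarTower ℂ A M] [IsBoundedSMul A M]
    (x₀ : M) : Submodule ℂ (M →L[ℂ] M) :=
  Submodule.span ℂ {S | ∃ f : M →L[ℂ] A,
    (∀ (a : A) (m : M), f (a • m) = a * f m) ∧ S = f.smulRight x₀}

variable {A : Type*} [CommCStarAlgebra A] [PartialOrder A] [StarOrderedRing A]
variable {M : Type*} [NormedAddCommGroup M] [CompleteSpace M] [NormedSpace ℂ M]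
  [Module A M] [IsScalarTower ℂ A M] [IsBoundedSMul A M]

/-- The natural `A`-scalar action on `End_A(M)` (for commutative `A`):
`(a • T) x = a • T x`. -/
noncomputable instance : SMul A ↥(EndA A M) where
  smul a T := ⟨a • (T : M →L[ℂ] M), by
    intro b x
    simp only [ContinuousLinearMap.coe_smul', Pi.smul_apply, T.2 b x, smul_smul, mul_comm a b]⟩


/-! If `e` is idempotent, splitting `T = e T + (1 - e) T` and `S = S e + S (1 - e)` and using
that `φ` kills zero products gives `φ (S e) T = φ S (e T)`. So the operators `G` with
`φ (S G) T = φ S (G T)` for all `S, T` form a subspace containing every idempotent, and by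
`A`-bilinearity it is closed under the `A`-action. Since `f₀ x₀ = 1`, each generator `θ_{x,f₀}`
of `𝓛` and `θ_{x₀,f}` of `𝓡` is an idempotent rank-one operator minus an `A`-multiple of the
idempotent `θ_{x₀,f₀}`. The equalities with the identity follow because `𝓛` is a left and `𝓡`
a right ideal. -/

section BalancedSubmodule

variable {K R J : Type*} [CommSemiring K] [Ring R] [Algebra K R] [AddCommGroup J] [Module K J]

def balancedSubmodule (φ : R →ₗ[K] R →ₗ[K] J) : Submodule K R where
  carrier := {G | ∀ S T, φ (S * G) T = φ S (G * T)}
  add_mem' {G H} hG hH S T := by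
    simp only [mul_add, add_mul, map_add, LinearMap.add_apply, hG S T, hH S T]
  zero_mem' S T := by simp
  smul_mem' c G hG S T := by
    simp only [mul_smul_comm, smul_mul_assoc, map_smul, LinearMap.smul_apply, hG S T]

variable {φ : R →ₗ[K] R →ₗ[K] J}

theorem IsIdempotentElem.mem_balancedSubmodule (hφ : ∀ S T, S * T = 0 → φ S T = 0) {e : R}
    (he : IsIdempotentElem e) : e ∈ balancedSubmodule φ := by
  intro S T
  have h₁ : φ (S * e) ((1 - e) * T) = 0 :=
    hφ _ _ (by rw [mul_assoc, ← mul_assoc e, he.mul_one_sub_self, zero_mul, mul_zero])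
  have h₂ : φ (S * (1 - e)) (e * T) = 0 :=
    hφ _ _ (by rw [mul_assoc, ← mul_assoc (1 - e), he.one_sub_mul_self, zero_mul, mul_zero])
  rw [sub_mul, one_mul, map_sub, sub_eq_zero] at h₁
  rw [mul_sub, mul_one, map_sub, LinearMap.sub_apply, sub_eq_zero] at h₂
  rw [h₁, h₂]

theorem smul_mem_balancedSubmodule {α : Type*} [SMul α R] [IsScalarTower α R R]
    [SMulCommClass α R R] (hφ : ∀ (a : α) S T, φ (a • S) T = φ S (a • T)) {G : R}
    (hG : G ∈ balancedSubmodule φ) (a : α) : a • G ∈ balancedSubmodule φ := by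
  intro S T
  rw [mul_smul_comm, hφ, hG, mul_smul_comm, smul_mul_assoc]

end BalancedSubmodule

section HilbertModule

omit [PartialOrder A] [StarOrderedRing A] [CompleteSpace M]

theorem smulRight_mem_EndA {f : M →L[ℂ] A} (hf : ∀ (a : A) (m : M), f (a • m) = a * f m)
    (x : M) : f.smulRight x ∈ EndA A M := fun a m => by
  simp only [ContinuousLinearMap.smulRight_apply, hf, mul_smul]

namespace EndA

/-- The paper's `θ_{x,f}`. -/
noncomputable def rankOne (f : M →L[ℂ] A) (hf : ∀ (a : A) (m : M), f (a • m) = a * f m) (x : M) :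
    EndA A M :=
  ⟨f.smulRight x, smulRight_mem_EndA hf x⟩

variable {f : M →L[ℂ] A} {hf : ∀ (a : A) (m : M), f (a • m) = a * f m} {x : M}

@[simp]
theorem rankOne_apply (m : M) : (rankOne f hf x : M →L[ℂ] M) m = f m • x := rfl

theorem isIdempotentElem_rankOne (hfx : f x = 1) : IsIdempotentElem (rankOne f hf x) :=
  Subtype.ext <| ContinuousLinearMap.ext fun m => by
    simp only [MulMemClass.coe_mul, mul_apply_eq_comp, rankOne_apply, hf, hfx, mul_one]

end EndA

instance : IsScalarTower A (EndA A M) (EndA A M) :=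
  ⟨fun _ _ _ => rfl⟩

instance : SMulCommClass A (EndA A M) (EndA A M) :=
  ⟨fun a S T => Subtype.ext <| ContinuousLinearMap.ext fun m => (S.2 a (T.1 m)).symm⟩

@[simp]
theorem EndA.coe_smul_apply (a : A) (T : EndA A M) (m : M) :
    ((a • T : EndA A M) : M →L[ℂ] M) m = a • (T : M →L[ℂ] M) m := rfl

open EndA

variable {J : Type*} [AddCommGroup J] [Module ℂ J] {φ : EndA A M →ₗ[ℂ] EndA A M →ₗ[ℂ] J}
  {x₀ : M} {f₀ : M →L[ℂ] A}

theorem rankOne_sub_smul_mem_balancedSubmodule (hφ : ∀ S T, S * T = 0 → φ S T = 0)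
    (hswap : ∀ (a : A) S T, φ (a • S) T = φ S (a • T))
    (hf₀ : ∀ (a : A) (m : M), f₀ (a • m) = a * f₀ m) (hx₀f₀ : f₀ x₀ = 1) {f : M →L[ℂ] A}
    {hf : ∀ (a : A) (m : M), f (a • m) = a * f m} {x : M} (hfx : f x = 1) (c : A) :
    rankOne f hf x - c • rankOne f₀ hf₀ x₀ ∈ balancedSubmodule φ :=
  sub_mem ((isIdempotentElem_rankOne hfx).mem_balancedSubmodule hφ) <|
    smul_mem_balancedSubmodule hswap
      ((isIdempotentElem_rankOne hx₀f₀).mem_balancedSubmodule hφ) c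

theorem rankOne_mem_balancedSubmodule_of_left (hφ : ∀ S T, S * T = 0 → φ S T = 0)
    (hswap : ∀ (a : A) S T, φ (a • S) T = φ S (a • T))
    (hf₀ : ∀ (a : A) (m : M), f₀ (a • m) = a * f₀ m) (hx₀f₀ : f₀ x₀ = 1) (x : M) :
    rankOne f₀ hf₀ x ∈ balancedSubmodule φ := by
  have hdecomp : rankOne f₀ hf₀ x =
      rankOne f₀ hf₀ (x + (1 - f₀ x) • x₀) - (1 - f₀ x) • rankOne f₀ hf₀ x₀ := by
    ext m
    simp only [rankOne_apply, AddSubgroupClass.coe_sub, sub_apply, coe_smul_apply, smul_add,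
      smul_sub, smul_smul, sub_mul, one_mul, mul_one, sub_smul, mul_comm (f₀ x)]
    abel
  have hfx : f₀ (x + (1 - f₀ x) • x₀) = 1 := by
    rw [map_add, hf₀, hx₀f₀, mul_one, add_sub_cancel]
  rw [hdecomp]
  exact rankOne_sub_smul_mem_balancedSubmodule hφ hswap hf₀ hx₀f₀ hfx _

theorem rankOne_mem_balancedSubmodule_of_right (hφ : ∀ S T, S * T = 0 → φ S T = 0)
    (hswap : ∀ (a : A) S T, φ (a • S) T = φ S (a • T))
    (hf₀ : ∀ (a : A) (m : M), f₀ (a • m) = a * f₀ m) (hx₀f₀ : f₀ x₀ = 1) {f : M →L[ℂ] A}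
    (hf : ∀ (a : A) (m : M), f (a • m) = a * f m) :
    rankOne f hf x₀ ∈ balancedSubmodule φ := by
  have hg : ∀ (a : A) (m : M), (f + (1 - f x₀) • f₀) (a • m) = a * (f + (1 - f x₀) • f₀) m := by
    intro a m
    simp only [add_apply, smul_apply, hf, hf₀, smul_eq_mul]
    ring
  have hdecomp : rankOne f hf x₀ =
      rankOne (f + (1 - f x₀) • f₀) hg x₀ - (1 - f x₀) • rankOne f₀ hf₀ x₀ := by
    ext m
    simp only [rankOne_apply, AddSubgroupClass.coe_sub, sub_apply, coe_smul_apply, add_apply,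
      smul_apply, smul_eq_mul, add_smul, smul_smul]
    abel
  have hgx₀ : (f + (1 - f x₀) • f₀) x₀ = 1 := by
    rw [add_apply, smul_apply, hx₀f₀, smul_eq_mul, mul_one, add_sub_cancel]
  rw [hdecomp]
  exact rankOne_sub_smul_mem_balancedSubmodule hφ hswap hf₀ hx₀f₀ hgx₀ _

theorem mem_balancedSubmodule_of_mem_Lset (hφ : ∀ S T, S * T = 0 → φ S T = 0)
    (hswap : ∀ (a : A) S T, φ (a • S) T = φ S (a • T))
    (hf₀ : ∀ (a : A) (m : M), f₀ (a • m) = a * f₀ m) (hx₀f₀ : f₀ x₀ = 1) {L : EndA A M}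
    (hL : (L : M →L[ℂ] M) ∈ Lset A M f₀) : L ∈ balancedSubmodule φ := by
  have hle : Lset A M f₀ ≤ (balancedSubmodule φ).map (EndA A M).val.toLinearMap := by
    refine Submodule.span_le.2 ?_
    rintro _ ⟨x, rfl⟩
    exact ⟨rankOne f₀ hf₀ x, rankOne_mem_balancedSubmodule_of_left hφ hswap hf₀ hx₀f₀ x, rfl⟩
  obtain ⟨G, hG, hGL⟩ := hle hL
  rwa [← Subtype.ext hGL]

theorem mem_balancedSubmodule_of_mem_Rset (hφ : ∀ S T, S * T = 0 → φ S T = 0)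
    (hswap : ∀ (a : A) S T, φ (a • S) T = φ S (a • T))
    (hf₀ : ∀ (a : A) (m : M), f₀ (a • m) = a * f₀ m) (hx₀f₀ : f₀ x₀ = 1) {R : EndA A M}
    (hR : (R : M →L[ℂ] M) ∈ Rset A M x₀) : R ∈ balancedSubmodule φ := by
  have hle : Rset A M x₀ ≤ (balancedSubmodule φ).map (EndA A M).val.toLinearMap := by
    refine Submodule.span_le.2 ?_
    rintro _ ⟨f, hf, rfl⟩
    exact ⟨rankOne f hf x₀, rankOne_mem_balancedSubmodule_of_right hφ hswap hf₀ hx₀f₀ hf, rfl⟩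
  obtain ⟨G, hG, hGR⟩ := hle hR
  rwa [← Subtype.ext hGR]

theorem mul_mem_Lset {S L : M →L[ℂ] M} (hS : S ∈ EndA A M) (hL : L ∈ Lset A M f₀) :
    S * L ∈ Lset A M f₀ := by
  suffices Lset A M f₀ ≤ (Lset A M f₀).comap (LinearMap.mulLeft ℂ S) from this hL
  refine Submodule.span_le.2 ?_
  rintro _ ⟨x, rfl⟩
  refine Submodule.subset_span ⟨S x, ContinuousLinearMap.ext fun m => ?_⟩
  exact hS (f₀ m) x

theorem mul_mem_Rset {R T : M →L[ℂ] M} (hT : T ∈ EndA A M) (hR : R ∈ Rset A M x₀) :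
    R * T ∈ Rset A M x₀ := by
  suffices Rset A M x₀ ≤ (Rset A M x₀).comap (LinearMap.mulRight ℂ T) from this hR
  refine Submodule.span_le.2 ?_
  rintro _ ⟨f, hf, rfl⟩
  refine Submodule.subset_span ⟨f.comp T, fun a m => ?_, rfl⟩
  rw [ContinuousLinearMap.comp_apply, hT, hf, ContinuousLinearMap.comp_apply]

end HilbertModule

theorem Abilinear_zero_product_preserving_general
    (x₀ : M) (f₀ : M →L[ℂ] A)
    (hf₀ : ∀ (a : A) (m : M), f₀ (a • m) = a * f₀ m)
    (hx₀f₀ : f₀ x₀ = 1)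
    {J : Type*} [AddCommGroup J] [Module ℂ J]
    (φ : ↥(EndA A M) → ↥(EndA A M) → J)
    (φ_add_left : ∀ S S' T : ↥(EndA A M), φ (S + S') T = φ S T + φ S' T)
    (φ_add_right : ∀ S T T' : ↥(EndA A M), φ S (T + T') = φ S T + φ S T')
    (φ_smul_left : ∀ (c : ℂ) (S T : ↥(EndA A M)), φ (c • S) T = c • φ S T)
    (φ_smul_right : ∀ (c : ℂ) (S T : ↥(EndA A M)), φ S (c • T) = c • φ S T)
    (φ_Asmul_swap : ∀ (a : A) (S T : ↥(EndA A M)), φ (a • S) T = φ S (a • T))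
    (φ_zero : ∀ S T : ↥(EndA A M), S * T = 0 → φ S T = 0) :
    ∀ S T : ↥(EndA A M),
      (∀ L' : ↥(EndA A M), (L' : M →L[ℂ] M) ∈ Lset A M f₀ →
        φ S (L' * T) = φ (S * L') T ∧ φ (S * L') T = φ 1 (S * L' * T)) ∧
      (∀ R' : ↥(EndA A M), (R' : M →L[ℂ] M) ∈ Rset A M x₀ →
        φ (S * R') T = φ S (R' * T) ∧ φ S (R' * T) = φ (S * R' * T) 1) := by
  let Φ := LinearMap.mk₂ ℂ φ φ_add_left φ_smul_left φ_add_right φ_smul_right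
  have hL : ∀ L : EndA A M, (L : M →L[ℂ] M) ∈ Lset A M f₀ → L ∈ balancedSubmodule Φ :=
    fun _ => mem_balancedSubmodule_of_mem_Lset φ_zero φ_Asmul_swap hf₀ hx₀f₀
  have hR : ∀ R : EndA A M, (R : M →L[ℂ] M) ∈ Rset A M x₀ → R ∈ balancedSubmodule Φ :=
    fun _ => mem_balancedSubmodule_of_mem_Rset φ_zero φ_Asmul_swap hf₀ hx₀f₀
  intro S T
  refine ⟨fun L' hL' => ⟨(hL L' hL' S T).symm, ?_⟩, fun R' hR' => ⟨hR R' hR' S T, ?_⟩⟩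
  · simpa [Φ] using hL (S * L') (mul_mem_Lset S.2 hL') 1 T
  · simpa [Φ, mul_assoc] using (hR (R' * T) (mul_mem_Rset T.2 hR') S 1).symm

/-- **Lemma 10.** For an `A`-bilinear map `φ` on `End_A(M)` preserving zero products,
`φ(A, L'B) = φ(AL', B) = φ(I, AL'B)` and `φ(AR', B) = φ(A, R'B) = φ(AR'B, I)` whenever
`L' ∈ 𝓛` and `R' ∈ 𝓡`. -/
theorem Abilinear_zero_product_preserving
    (inn : M → M → A)
    (inn_add_left : ∀ x y z : M, inn (x + y) z = inn x z + inn y z)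
    (inn_smul_left : ∀ (a : A) (x y : M), inn (a • x) y = a * inn x y)
    (inn_star : ∀ x y : M, inn x y = star (inn y x))
    (inn_self_nonneg : ∀ x : M, 0 ≤ inn x x)
    (inn_definite : ∀ x : M, inn x x = 0 → x = 0)
    (norm_eq : ∀ x : M, ‖x‖ = Real.sqrt ‖inn x x‖)
    (x₀ : M) (f₀ : M →L[ℂ] A)
    (hf₀ : ∀ (a : A) (m : M), f₀ (a • m) = a * f₀ m)
    (hx₀f₀ : f₀ x₀ = 1)
    {J : Type*} [AddCommGroup J] [Module ℂ J] [Module A J] [IsScalarTower ℂ A J]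
    (φ : ↥(EndA A M) → ↥(EndA A M) → J)
    (φ_add_left : ∀ S S' T : ↥(EndA A M), φ (S + S') T = φ S T + φ S' T)
    (φ_add_right : ∀ S T T' : ↥(EndA A M), φ S (T + T') = φ S T + φ S T')
    (φ_smul_left : ∀ (c : ℂ) (S T : ↥(EndA A M)), φ (c • S) T = c • φ S T)
    (φ_smul_right : ∀ (c : ℂ) (S T : ↥(EndA A M)), φ S (c • T) = c • φ S T)
    (φ_Asmul_left : ∀ (a : A) (S T : ↥(EndA A M)), φ (a • S) T = a • φ S T)
    (φ_Asmul_swap : ∀ (a : A) (S T : ↥(EndA A M)), φ (a • S) T = φ S (a • T))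
    (φ_zero : ∀ S T : ↥(EndA A M), S * T = 0 → φ S T = 0) :
    ∀ S T : ↥(EndA A M),
      (∀ L' : ↥(EndA A M), (L' : M →L[ℂ] M) ∈ Lset A M f₀ →
        φ S (L' * T) = φ (S * L') T ∧ φ (S * L') T = φ 1 (S * L' * T)) ∧
      (∀ R' : ↥(EndA A M), (R' : M →L[ℂ] M) ∈ Rset A M x₀ →
        φ (S * R') T = φ S (R' * T) ∧ φ S (R' * T) = φ (S * R' * T) 1) :=
  Abilinear_zero_product_preserving_general x₀ f₀ hf₀ hx₀f₀ φ φ_add_left φ_add_right φ_smul_left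
    φ_smul_right φ_Asmul_swap φ_zero
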